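/- arXiv:2605.13917 — 3 statements merged into one kernel-verified Lean document; each statement's English description precedes it below -/
import Mathlib

section
/- Let G = (V, E⁺, E⁰) be a fuzzy graph with weight function ω and let k, d be nonnegative integers. Assume that for every pair of distinct vertices u, v with {u,v} ∉ E⁺ one has |N⁺(u) ∩ N⁺(v)| ≤ k. Let 𝒞 be a clustering of G of cost at most k, let C ∈ 𝒞 be a cluster of size t > 2k + 2d, and let (v₁, …, v_t) be an ordering of C such that each vᵢ has at most d fuzzy neighbors among v_{i+1}, …, v_t. Then the vertices v₁, …, v_{t−2d−2k−1} are pairwise joined by real edges, i.e., {v₁, …, v_{t−2d−2k−1}} is a clique in G⁽⁺⁾. -/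
open Finset

/-- A fuzzy graph: a finite vertex set with disjoint symmetric irreflexive sets of
'real' edges and 'fuzzy' edges; remaining pairs of distinct vertices are 'nonedges'. -/
structure FuzzyGraph (V : Type*) where
  real : V → V → Bool
  fuzzy : V → V → Bool
  real_symm : ∀ u v, real u v = real v u
  fuzzy_symm : ∀ u v, fuzzy u v = fuzzy v u
  real_irrefl : ∀ v, real v v = false
  fuzzy_irrefl : ∀ v, fuzzy v v = false
  not_real_and_fuzzy : ∀ u v, ¬(real u v = true ∧ fuzzy u v = true)

namespace FuzzyGraph

variable {V : Type*}

/-- The pair `{u,v}` is a nonedge: distinct, neither a real nor a fuzzy edge. -/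
def nonedge (G : FuzzyGraph V) (u v : V) : Prop :=
  u ≠ v ∧ ¬G.real u v ∧ ¬G.fuzzy u v

instance (G : FuzzyGraph V) [DecidableEq V] (u v : V) : Decidable (G.nonedge u v) :=
  inferInstanceAs (Decidable (u ≠ v ∧ ¬G.real u v ∧ ¬G.fuzzy u v))

/-- The simple graph `G⁽⁺⁾` of real edges. -/
def plus (G : FuzzyGraph V) : SimpleGraph V where
  Adj u v := G.real u v
  symm := by constructor; intro u v h; rwa [G.real_symm] at h
  loopless := by constructor; intro v h; rw [G.real_irrefl] at h; exact Bool.noConfusion h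

/-- The simple graph `G⁽⁰⁾` of fuzzy edges. -/
def zero (G : FuzzyGraph V) : SimpleGraph V where
  Adj u v := G.fuzzy u v
  symm := by constructor; intro u v h; rwa [G.fuzzy_symm] at h
  loopless := by constructor; intro v h; rw [G.fuzzy_irrefl] at h; exact Bool.noConfusion h

variable [Fintype V] [DecidableEq V]

/-- The real neighborhood `N⁺(v)`. -/
def realNbrs (G : FuzzyGraph V) (v : V) : Finset V := univ.filter fun u => G.real v u

/-- The fuzzy neighborhood `N⁰(v)`. -/
def fuzzyNbrs (G : FuzzyGraph V) (v : V) : Finset V := univ.filter fun u => G.fuzzy v u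

/-- The nonneighborhood `N⁻(v)`. -/
def nonNbrs (G : FuzzyGraph V) (v : V) : Finset V := univ.filter fun u => G.nonedge v u

/-- The closed real neighborhood `N⁺[v]`. -/
def closedRealNbrs (G : FuzzyGraph V) (v : V) : Finset V := insert v (G.realNbrs v)

end FuzzyGraph

/-- `ω` is a valid weight function for `G`: symmetric nonnegative integer weights,
zero exactly on the fuzzy edges. -/
def IsWeight {V : Type*} [Fintype V] [DecidableEq V] (G : FuzzyGraph V) (ω : V → V → ℕ) : Prop :=
  (∀ u v, ω u v = ω v u) ∧ ∀ u v : V, u ≠ v → (ω u v = 0 ↔ G.fuzzy u v)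

/-- The unit weight function: weight 1 on real edges and nonedges, 0 on fuzzy edges. -/
def unitW {V : Type*} (G : FuzzyGraph V) : V → V → ℕ := fun u v => if G.fuzzy u v then 0 else 1

/-- Two vertices lie in a common cluster of the clustering `𝒞`. -/
def together {V : Type*} [Fintype V] [DecidableEq V] (𝒞 : Finpartition (univ : Finset V))
    (u v : V) : Prop :=
  ∃ C ∈ 𝒞.parts, u ∈ C ∧ v ∈ C

instance {V : Type*} [Fintype V] [DecidableEq V] (𝒞 : Finpartition (univ : Finset V)) (u v : V) :
    Decidable (together 𝒞 u v) :=
  inferInstanceAs (Decidable (∃ C ∈ 𝒞.parts, u ∈ C ∧ v ∈ C))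

/-- The cost of a clustering: total weight of real edges between different clusters
plus total weight of nonedges inside clusters.  (Each unordered pair is counted twice
in the sum over ordered pairs, whence the division by 2.) -/
def cost {V : Type*} [Fintype V] [DecidableEq V] (G : FuzzyGraph V) (ω : V → V → ℕ)
    (𝒞 : Finpartition (univ : Finset V)) : ℕ :=
  (∑ p ∈ univ.offDiag,
      ((if G.real p.1 p.2 ∧ ¬together 𝒞 p.1 p.2 then ω p.1 p.2 else 0) +
       (if G.nonedge p.1 p.2 ∧ together 𝒞 p.1 p.2 then ω p.1 p.2 else 0))) / 2

/-- A clique in `G⁽⁺⁾`: pairwise real-adjacent vertices. -/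
def IsRealClique {V : Type*} (G : FuzzyGraph V) (K : Finset V) : Prop :=
  ∀ u ∈ K, ∀ v ∈ K, u ≠ v → G.real u v

/-- A clique in `G⁽⁰⁾`: pairwise fuzzy-adjacent vertices. -/
def IsFuzzyClique {V : Type*} (G : FuzzyGraph V) (K : Finset V) : Prop :=
  ∀ u ∈ K, ∀ v ∈ K, u ≠ v → G.fuzzy u v

/-- A critical clique of `G⁽⁺⁾`: a clique with `⋂_{x ∈ K} N⁺[x] = ⋃_{x ∈ K} N⁺[x]`,
inclusion-wise maximal with this property. -/
def IsCriticalClique {V : Type*} [Fintype V] [DecidableEq V] (G : FuzzyGraph V)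
    (K : Finset V) : Prop :=
  IsRealClique G K ∧ K.inf (G.closedRealNbrs) = K.sup (G.closedRealNbrs) ∧
    ∀ K' : Finset V, K ⊆ K' → IsRealClique G K' →
      K'.inf (G.closedRealNbrs) = K'.sup (G.closedRealNbrs) → K' = K

/-- A simple graph is `c`-closed if every pair of distinct nonadjacent vertices has
fewer than `c` common neighbors. -/
def IsCClosed {V : Type*} (H : SimpleGraph V) (c : ℕ) : Prop :=
  ∀ u v : V, u ≠ v → ¬H.Adj u v → Set.ncard {w | H.Adj u w ∧ H.Adj v w} < c

/-- A fuzzy graph is fuzzy `c`-closed if its fuzzy edge graph `G⁽⁰⁾` is `c`-closed. -/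
def FuzzyCClosed {V : Type*} [Fintype V] [DecidableEq V] (G : FuzzyGraph V) (c : ℕ) : Prop :=
  ∀ u v : V, u ≠ v → ¬G.fuzzy u v → ((G.fuzzyNbrs u) ∩ (G.fuzzyNbrs v)).card < c

/-!
Suppose two early vertices `u = vᵢ`, `v = vⱼ` of the ordering were not joined by a real edge.
The last `2d + 2k + 1` vertices of `C` come after both, so at most `2d` of them are fuzzy
neighbours of `u` or `v`, and by the closedness assumption at most `k` of the rest are common real
neighbours of `u` and `v`. Each of the remaining `k + 1` vertices forms a nonedge with `u` or `v`
inside the cluster `C`, and these nonedges are distinct, so the clustering costs more than `k`.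
-/

namespace FuzzyGraph

variable {V : Type*} {G : FuzzyGraph V}

theorem nonedge.symm {u v : V} (h : G.nonedge u v) : G.nonedge v u :=
  ⟨h.1.symm, by rw [G.real_symm]; exact h.2.1, by rw [G.fuzzy_symm]; exact h.2.2⟩

end FuzzyGraph

section Cost

variable {V : Type*} [Fintype V] [DecidableEq V] {G : FuzzyGraph V} {ω : V → V → ℕ}
  {𝒞 : Finpartition (univ : Finset V)}

theorem together.symm {u v : V} (h : together 𝒞 u v) : together 𝒞 v u :=
  let ⟨C, hC, hu, hv⟩ := h
  ⟨C, hC, hv, hu⟩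

theorem IsWeight.pos_of_nonedge (hω : IsWeight G ω) {u v : V} (h : G.nonedge u v) :
    0 < ω u v :=
  Nat.pos_of_ne_zero fun h0 => h.2.2 ((hω.2 u v h.1).mp h0)

/-- `cost` sums over ordered pairs, so a nonedge listed in only one orientation in `N` is
counted twice there. -/
theorem card_le_cost (hω : IsWeight G ω) {N : Finset (V × V)}
    (hN : ∀ q ∈ N, G.nonedge q.1 q.2 ∧ together 𝒞 q.1 q.2)
    (hdisj : Disjoint N (N.image Prod.swap)) : N.card ≤ cost G ω 𝒞 := by
  set M := N ∪ N.image Prod.swap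
  have hM : ∀ q ∈ M, G.nonedge q.1 q.2 ∧ together 𝒞 q.1 q.2 := by
    simp only [M, mem_union, mem_image]
    rintro q (hq | ⟨q, hq, rfl⟩)
    · exact hN q hq
    · exact ⟨(hN q hq).1.symm, (hN q hq).2.symm⟩
  have hcard : M.card = N.card * 2 := by
    rw [card_union_of_disjoint hdisj, card_image_of_injective _ Prod.swap_injective, mul_two]
  rw [cost, Nat.le_div_iff_mul_le two_pos, ← hcard]
  calc M.card ≤ ∑ q ∈ M, ((if G.real q.1 q.2 ∧ ¬together 𝒞 q.1 q.2 then ω q.1 q.2 else 0) +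
        (if G.nonedge q.1 q.2 ∧ together 𝒞 q.1 q.2 then ω q.1 q.2 else 0)) := by
        rw [card_eq_sum_ones]
        refine sum_le_sum fun q hq => ?_
        rw [if_neg fun h => (hM q hq).1.2.1 h.1, if_pos (hM q hq)]
        exact Nat.le_add_left_of_le (hω.pos_of_nonedge (hM q hq).1)
    _ ≤ _ := sum_le_sum_of_subset fun q hq => mem_offDiag.2 ⟨mem_univ _, mem_univ _, (hM q hq).1.1⟩

theorem card_le_card_inter_realNbrs_add_cost (hω : IsWeight G ω) {C : Finset V}
    (hC : C ∈ 𝒞.parts) {u v : V} (hu : u ∈ C) (hv : v ∈ C) {W : Finset V} (hWC : W ⊆ C)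
    (huW : u ∉ W) (hvW : v ∉ W) (hfuzzy : ∀ w ∈ W, ¬G.fuzzy u w ∧ ¬G.fuzzy v w) :
    W.card ≤ (G.realNbrs u ∩ G.realNbrs v).card + cost G ω 𝒞 := by
  set R := G.realNbrs u ∩ G.realNbrs v
  let p : V → V := fun w => if G.real u w then v else u
  have hpW : ∀ w, p w ∉ W := fun w => by dsimp only [p]; split_ifs <;> assumption
  have hp : ∀ w ∈ W \ R, G.nonedge (p w) w ∧ together 𝒞 (p w) w := by
    intro w hw
    obtain ⟨hwW, hwR⟩ := mem_sdiff.1 hw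
    have hnotR : ¬(G.real u w ∧ G.real v w) := by
      simpa [R, FuzzyGraph.realNbrs] using hwR
    have hne : p w ≠ w := fun h => hpW w (by rwa [h])
    by_cases hr : G.real u w
    · have hpv : p w = v := if_pos hr
      rw [hpv] at hne ⊢
      exact ⟨⟨hne, fun h => hnotR ⟨hr, h⟩, (hfuzzy w hwW).2⟩, C, hC, hv, hWC hwW⟩
    · have hpu : p w = u := if_neg hr
      rw [hpu] at hne ⊢
      exact ⟨⟨hne, hr, (hfuzzy w hwW).1⟩, C, hC, hu, hWC hwW⟩
  have hsdiff : (W \ R).card ≤ cost G ω 𝒞 := by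
    have h := card_le_cost hω (N := (W \ R).image fun w => (p w, w))
      (by simpa only [forall_mem_image] using hp) (by
        rw [disjoint_left]
        simp only [mem_image]
        rintro _ ⟨w, -, rfl⟩ ⟨_, ⟨w', hw', rfl⟩, h⟩
        have hw'p : w' = p w := congrArg Prod.fst h
        exact hpW w (hw'p ▸ (mem_sdiff.1 hw').1))
    rwa [card_image_of_injective _ fun a b h => congrArg Prod.snd h] at h
  calc W.card = (W ∩ R).card + (W \ R).card := (card_inter_add_card_sdiff W R).symm
    _ ≤ R.card + cost G ω 𝒞 := add_le_add (card_le_card inter_subset_right) hsdiff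

end Cost

theorem FuzzyGraph.card_sub_le_card_late_nonfuzzy {V : Type*} (G : FuzzyGraph V) {t d : ℕ}
    (σ : Fin t → V) (hdeg : ∀ i : Fin t, #{j | i < j ∧ G.fuzzy (σ i) (σ j)} ≤ d) {m : ℕ}
    {i j : Fin t} (hi : (i : ℕ) < m) (hj : (j : ℕ) < m) :
    t - m - 2 * d ≤
      #{l : Fin t | m ≤ (l : ℕ) ∧ ¬G.fuzzy (σ i) (σ l) ∧ ¬G.fuzzy (σ j) (σ l)} := by
  set L : Finset (Fin t) := {l | m ≤ (l : ℕ) ∧ ¬G.fuzzy (σ i) (σ l) ∧ ¬G.fuzzy (σ j) (σ l)}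
  set Fi : Finset (Fin t) := {l | i < l ∧ G.fuzzy (σ i) (σ l)}
  set Fj : Finset (Fin t) := {l | j < l ∧ G.fuzzy (σ j) (σ l)}
  have htail : #{l : Fin t | m ≤ (l : ℕ)} = t - m := by
    have h := card_filter_add_card_filter_not (s := univ) (p := fun l : Fin t => (l : ℕ) < m)
    rw [Fin.card_filter_val_lt, card_univ, Fintype.card_fin] at h
    simp only [not_lt] at h
    omega
  have hcover : ({l : Fin t | m ≤ (l : ℕ)} : Finset (Fin t)) ⊆ L ∪ Fi ∪ Fj := by
    intro l hl
    simp only [L, Fi, Fj, mem_union, mem_filter, mem_univ, true_and] at hl ⊢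
    have hil : i < l := by rw [Fin.lt_def]; omega
    have hjl : j < l := by rw [Fin.lt_def]; omega
    tauto
  have hFi : #Fi ≤ d := hdeg i
  have hFj : #Fj ≤ d := hdeg j
  have := card_le_card hcover
  have := card_union_le (L ∪ Fi) Fj
  have := card_union_le L Fi
  omega

theorem stmt5_general {V : Type*} [Fintype V] [DecidableEq V]
    (G : FuzzyGraph V) (ω : V → V → ℕ) (hω : IsWeight G ω) (k d : ℕ)
    (hred : ∀ u v : V, u ≠ v → ¬G.real u v → ((G.realNbrs u) ∩ (G.realNbrs v)).card ≤ k)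
    (𝒞 : Finpartition (Finset.univ : Finset V)) (hcost : cost G ω 𝒞 ≤ k)
    (C : Finset V) (hC : C ∈ 𝒞.parts) (t : ℕ)
    (σ : Fin t → V) (hσinj : Function.Injective σ) (hσmem : ∀ i, σ i ∈ C)
    (hdeg : ∀ i : Fin t,
      (Finset.univ.filter fun j : Fin t => i < j ∧ G.fuzzy (σ i) (σ j)).card ≤ d) :
    ∀ i j : Fin t, (i : ℕ) < t - 2 * d - 2 * k - 1 → (j : ℕ) < t - 2 * d - 2 * k - 1 →
      i ≠ j → G.real (σ i) (σ j) := by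
  intro i j hi hj hij
  by_contra hreal
  set m := t - 2 * d - 2 * k - 1 with hm
  set L : Finset (Fin t) := {l | m ≤ (l : ℕ) ∧ ¬G.fuzzy (σ i) (σ l) ∧ ¬G.fuzzy (σ j) (σ l)}
  have hnotL : ∀ a : Fin t, (a : ℕ) < m → σ a ∉ L.image σ := by
    intro a ha
    rw [hσinj.mem_finset_image]
    simp only [L, mem_filter, mem_univ, true_and]
    omega
  have hL : L.card ≤ (G.realNbrs (σ i) ∩ G.realNbrs (σ j)).card + cost G ω 𝒞 := by
    rw [← card_image_of_injective L hσinj]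
    refine card_le_card_inter_realNbrs_add_cost hω hC (hσmem i) (hσmem j) ?_ (hnotL i hi)
      (hnotL j hj) ?_
    · exact image_subset_iff.2 fun l _ => hσmem l
    · simp only [forall_mem_image, L, mem_filter, mem_univ, true_and]
      exact fun l hl => hl.2
  have hlate : t - m - 2 * d ≤ L.card := G.card_sub_le_card_late_nonfuzzy σ hdeg hi hj
  have hcommon := hred _ _ (hσinj.ne hij) hreal
  omega

/-- In a graph reduced so that real non-adjacent pairs have at most `k` common
real neighbors, in any cluster `C` of size `t > 2k + 2d` of a clustering of cost at most `k`,
the first `t - 2d - 2k - 1` vertices of a fuzzy degeneracy ordering of `C` form a real clique. -/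
theorem stmt5 {V : Type*} [Fintype V] [DecidableEq V]
    (G : FuzzyGraph V) (ω : V → V → ℕ) (hω : IsWeight G ω) (k d : ℕ)
    (hred : ∀ u v : V, u ≠ v → ¬G.real u v → ((G.realNbrs u) ∩ (G.realNbrs v)).card ≤ k)
    (𝒞 : Finpartition (Finset.univ : Finset V)) (hcost : cost G ω 𝒞 ≤ k)
    (C : Finset V) (hC : C ∈ 𝒞.parts) (t : ℕ) (ht : C.card = t) (htlarge : 2 * k + 2 * d < t)
    (σ : Fin t → V) (hσinj : Function.Injective σ) (hσmem : ∀ i, σ i ∈ C)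
    (hdeg : ∀ i : Fin t,
      (Finset.univ.filter fun j : Fin t => i < j ∧ G.fuzzy (σ i) (σ j)).card ≤ d) :
    ∀ i j : Fin t, (i : ℕ) < t - 2 * d - 2 * k - 1 → (j : ℕ) < t - 2 * d - 2 * k - 1 →
      i ≠ j → G.real (σ i) (σ j) :=
  stmt5_general G ω hω k d hred 𝒞 hcost C hC t σ hσinj hσmem hdeg
end

section
/- Let G = (V, E⁺, E⁰) be a fuzzy graph with weight function ω and let k ≥ 1 and d ≥ 1 be integers. Assume: (i) for every pair of distinct vertices u, v with {u,v} ∉ E⁺ one has |N⁺(u) ∩ N⁺(v)| ≤ k; (ii) every critical clique of G⁽⁺⁾ has at most k + 2 vertices; (iii) every connected component of G⁽⁺⁾ contains two vertices that form a nonedge of G; (iv) there is an ordering (v₁, …, v_n) of V such that each vᵢ has at most d fuzzy neighbors among v_{i+1}, …, v_n. If G admits a clustering of cost at most k, then |V| ≤ 30k³d. -/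
/-!
Fix a clustering of cost at most `k` and call a vertex affected if it lies in an edited pair (a
real edge between clusters or a nonedge inside a cluster); edited pairs have positive weight, so
there are at most `2k` affected vertices, and by (iii) every cluster contains one, so there are
at most `2k` clusters. An unaffected vertex of a cluster `C` has all its real neighbours in `C`
and is real- or fuzzy-adjacent to every other vertex of `C`. Two vertices of `C` that are not
real-adjacent therefore cover `C`, up to affected vertices, by their at most `k` common real
neighbours and their fuzzy neighbourhoods in `C`. Hence the unaffected vertices of small fuzzy
degree form a real clique; those of its vertices with no real neighbour among the clique's fuzzy
neighbours are true twins, hence at most `k + 2` by (ii), and each fuzzy neighbour has at most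
`k` real neighbours in the clique by (i). Since the ordering (iv) bounds the total fuzzy degree
inside `C` by `2d(|C| - 1)`, this gives `|C| ≤ 4d(k + 1) + 2k + 2a + 3`, where `a` is the number
of affected vertices in `C`, and summing over the clusters gives `|V| ≤ 30k³d`.
-/

open Finset

namespace Finset

theorem even_sum_offDiag_of_swap {α : Type*} [DecidableEq α] (s : Finset α) (f : α × α → ℕ)
    (hf : ∀ p, f p.swap = f p) : Even (∑ p ∈ s.offDiag, f p) := by
  rw [← ZMod.natCast_eq_zero_iff_even, Nat.cast_sum]
  refine sum_involution (fun p _ => p.swap) (fun p _ => ?_) (fun p hp _ => ?_)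
    (fun p hp => ?_) (fun p _ => p.swap_swap)
  · rw [hf, ← two_mul]
    exact mul_eq_zero_of_left rfl _
  · have := (mem_offDiag.1 hp).2.2
    contrapose! this
    exact congrArg Prod.snd this
  · obtain ⟨h₁, h₂, h₁₂⟩ := mem_offDiag.1 hp
    exact mem_offDiag.2 ⟨h₂, h₁, h₁₂.symm⟩

theorem eq_sup_of_inf_eq_sup {ι α : Type*} [Lattice α] [BoundedOrder α] {s : Finset ι}
    {f : ι → α} (h : s.inf f = s.sup f) {i : ι} (hi : i ∈ s) : f i = s.sup f :=
  le_antisymm (le_sup hi) (h ▸ inf_le hi)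

end Finset

namespace Finpartition

variable {α : Type*} [DecidableEq α] {s t : Finset α} (P : Finpartition s)

theorem sum_card_inter_parts (ht : t ⊆ s) : ∑ C ∈ P.parts, #(C ∩ t) = #t := by
  rw [← (P.restrict ht).sum_card_parts, P.sum_restrict ht card card_empty]
  rfl

theorem card_parts_le_of_inter_nonempty (ht : t ⊆ s) (h : ∀ C ∈ P.parts, (C ∩ t).Nonempty) :
    #P.parts ≤ #t :=
  calc #P.parts = ∑ _C ∈ P.parts, 1 := card_eq_sum_ones _
    _ ≤ ∑ C ∈ P.parts, #(C ∩ t) := sum_le_sum fun C hC => (h C hC).card_pos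
    _ = #t := P.sum_card_inter_parts ht

end Finpartition

theorem SimpleGraph.sum_card_filter_adj_le {V ι : Type*} [DecidableEq V] [Fintype ι]
    [LinearOrder ι] (H : SimpleGraph V) [DecidableRel H.Adj] (σ : ι ≃ V) {d : ℕ}
    (hσ : ∀ i, #{j | i < j ∧ H.Adj (σ i) (σ j)} ≤ d) (C : Finset V) :
    ∑ w ∈ C, #{u ∈ C | H.Adj w u} ≤ 2 * d * (#C - 1) := by
  set fwd : V → ℕ := fun w => #{u ∈ C | H.Adj w u ∧ σ.symm w < σ.symm u}
  have hsplit : ∑ w ∈ C, #{u ∈ C | H.Adj w u} = 2 * ∑ w ∈ C, fwd w := by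
    have hpt : ∀ w u, (if H.Adj w u then 1 else 0 : ℕ) =
        (if H.Adj w u ∧ σ.symm w < σ.symm u then 1 else 0) +
          (if H.Adj u w ∧ σ.symm u < σ.symm w then 1 else 0) := by
      intro w u
      by_cases hwu : H.Adj w u
      · rcases (σ.symm.injective.ne hwu.ne).lt_or_gt with h | h <;>
          simp [hwu, hwu.symm, h, h.not_gt]
      · have huw : ¬H.Adj u w := fun h => hwu h.symm
        simp [hwu, huw]
    simp only [fwd, card_filter, hpt, sum_add_distrib, two_mul]
    exact congrArg _ sum_comm
  have hfwd : ∀ w, fwd w ≤ d := fun w =>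
    (card_le_card_of_injOn σ.symm (t := {j | σ.symm w < j ∧ H.Adj (σ (σ.symm w)) (σ j)})
      (fun u hu => by simpa using (mem_filter.1 hu).2.symm) σ.symm.injective.injOn).trans
      (hσ (σ.symm w))
  rcases C.eq_empty_or_nonempty with rfl | hC
  · simp
  obtain ⟨b, hb, hbmax⟩ := exists_max_image C σ.symm hC
  have hfwd_b : fwd b = 0 :=
    card_eq_zero.2 (filter_eq_empty_iff.2 fun u hu h => (hbmax u hu).not_gt h.2)
  calc ∑ w ∈ C, #{u ∈ C | H.Adj w u} = 2 * ∑ w ∈ C.erase b, fwd w := by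
        rw [hsplit, ← add_sum_erase C fwd hb, hfwd_b, zero_add]
    _ ≤ 2 * (#(C.erase b) • d) := by gcongr; exact sum_le_card_nsmul _ _ _ fun w _ => hfwd w
    _ = 2 * d * (#C - 1) := by rw [card_erase_of_mem hb, smul_eq_mul]; ring

section Together

variable {V : Type*} [Fintype V] [DecidableEq V] (𝒞 : Finpartition (univ : Finset V))

theorem together_comm {u v : V} : together 𝒞 u v ↔ together 𝒞 v u := by
  simp only [together, and_comm]

variable {𝒞}

theorem mem_of_together {C : Finset V} (hC : C ∈ 𝒞.parts) {u v : V} (hu : u ∈ C)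
    (h : together 𝒞 u v) : v ∈ C := by
  obtain ⟨C', hC', hu', hv'⟩ := h
  rwa [𝒞.eq_of_mem_parts hC' hC hu' hu] at hv'

end Together

theorem Nat.le_add_of_mul_self_le_mul_add {D X Y : ℕ} (h : D * D ≤ X * (D + Y)) : D ≤ X + Y := by
  nlinarith

namespace FuzzyGraph

variable {V : Type*} (G : FuzzyGraph V)

theorem ne_of_real {u v : V} (h : G.real u v) : u ≠ v := by
  rintro rfl
  simp [G.real_irrefl] at h

theorem ne_of_fuzzy {u v : V} (h : G.fuzzy u v) : u ≠ v := by
  rintro rfl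
  simp [G.fuzzy_irrefl] at h

theorem not_real_of_fuzzy {u v : V} (h : G.fuzzy u v) : ¬G.real u v :=
  fun hr => G.not_real_and_fuzzy u v ⟨hr, h⟩

theorem nonedge_comm {u v : V} : G.nonedge u v ↔ G.nonedge v u := by
  simp only [nonedge, ne_comm, G.real_symm u, G.fuzzy_symm u]

instance : DecidableRel G.zero.Adj := fun u v => inferInstanceAs (Decidable (G.fuzzy u v))

/-- The situation of a vertex `u` of a cluster `C` that lies in no edited pair of the
clustering. -/
def IsSettledIn (C : Finset V) (u : V) : Prop :=
  (∀ z, G.real u z → z ∈ C) ∧ ∀ z ∈ C, ¬G.nonedge u z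

theorem IsSettledIn.fuzzy {G : FuzzyGraph V} {C : Finset V} {u z : V} (h : G.IsSettledIn C u)
    (hz : z ∈ C) (hzu : z ≠ u) (hr : ¬G.real u z) : G.fuzzy u z := by
  by_contra hf
  exact h.2 z hz ⟨hzu.symm, hr, hf⟩

variable [Fintype V] [DecidableEq V]

theorem mem_closedRealNbrs {u v : V} : u ∈ G.closedRealNbrs v ↔ u = v ∨ G.real v u := by
  simp [closedRealNbrs, realNbrs]

theorem isCriticalClique_trueTwins (y : V) :
    IsCriticalClique G {x | G.closedRealNbrs x = G.closedRealNbrs y} := by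
  set T : Finset V := {x | G.closedRealNbrs x = G.closedRealNbrs y}
  have hT : ∀ x ∈ T, G.closedRealNbrs x = G.closedRealNbrs y := fun x hx => (mem_filter.1 hx).2
  have hyT : y ∈ T := by simp [T]
  have hsup : T.sup G.closedRealNbrs = G.closedRealNbrs y :=
    (sup_congr rfl hT).trans (sup_const ⟨y, hyT⟩ _)
  refine ⟨fun u hu v hv huv => ?_, ?_, fun K hTK _ hK => ?_⟩
  · have : u ∈ G.closedRealNbrs v := by
      rw [hT v hv, ← hT u hu, mem_closedRealNbrs]
      exact Or.inl rfl
    rw [G.real_symm]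
    exact (G.mem_closedRealNbrs.1 this).resolve_left huv
  · rw [hsup]
    exact (inf_congr rfl hT).trans (inf_const ⟨y, hyT⟩ _)
  · refine (Subset.antisymm (fun x hx => mem_filter.2 ⟨mem_univ x, ?_⟩) hTK)
    rw [eq_sup_of_inf_eq_sup hK hx, eq_sup_of_inf_eq_sup hK (hTK hyT)]

section SettledVertices

variable {G} {k d : ℕ} {C S : Finset V}

theorem card_le_of_not_real
    (hcommon : ∀ u v, u ≠ v → ¬G.real u v → #(G.realNbrs u ∩ G.realNbrs v) ≤ k)
    (hS : ∀ w ∈ S, G.IsSettledIn C w) {u v : V} (hu : u ∈ C) (hv : v ∈ C) (huv : u ≠ v)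
    (hr : ¬G.real u v) :
    #C ≤ #(C \ S) + k + 2 + #{w ∈ C | G.fuzzy u w} + #{w ∈ C | G.fuzzy v w} := by
  have hadj : ∀ w ∈ S, ∀ x ∈ C, w ≠ x → G.real x w ∨ G.fuzzy x w := fun w hw x hx hwx => by
    rw [G.real_symm, G.fuzzy_symm]
    by_cases hr : G.real w x
    · exact Or.inl hr
    · exact Or.inr ((hS w hw).fuzzy hx hwx.symm hr)
  set R := G.realNbrs u ∩ G.realNbrs v
  set Fu := {w ∈ C | G.fuzzy u w}
  set Fv := {w ∈ C | G.fuzzy v w}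
  have hcover : C ⊆ insert u (insert v (R ∪ Fu ∪ Fv ∪ C \ S)) := by
    intro w hw
    by_cases hwu : w = u
    · exact mem_insert.2 (Or.inl hwu)
    by_cases hwv : w = v
    · exact mem_insert_of_mem (mem_insert.2 (Or.inl hwv))
    refine mem_insert_of_mem (mem_insert_of_mem ?_)
    by_cases hwS : w ∈ S
    · rcases hadj w hwS u hu hwu with hru | hfu
      · rcases hadj w hwS v hv hwv with hrv | hfv
        · simp [R, realNbrs, hru, hrv]
        · simp [Fv, hw, hfv]
      · simp [Fu, hw, hfu]
    · simp [hw, hwS]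
  have h₁ := card_insert_le u (insert v (R ∪ Fu ∪ Fv ∪ C \ S))
  have h₂ := card_insert_le v (R ∪ Fu ∪ Fv ∪ C \ S)
  have h₃ := card_union_le (R ∪ Fu ∪ Fv) (C \ S)
  have h₄ := card_union_le (R ∪ Fu) Fv
  have h₅ := card_union_le R Fu
  have hR : #R ≤ k := hcommon u v huv hr
  have := card_le_card hcover
  omega

theorem card_le_of_isRealClique
    (hcommon : ∀ u v, u ≠ v → ¬G.real u v → #(G.realNbrs u ∩ G.realNbrs v) ≤ k)
    (htwin : ∀ y, #{x | G.closedRealNbrs x = G.closedRealNbrs y} ≤ k + 2)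
    {K : Finset V} (hK : IsRealClique G K) (hKC : ∀ y ∈ K, G.IsSettledIn C y) :
    #K ≤ k + 2 + #{z ∈ C | ∃ v ∈ K, G.fuzzy z v} * k := by
  set Z := {z ∈ C | ∃ v ∈ K, G.fuzzy z v}
  set U := {y ∈ K | ∀ z ∈ Z, ¬G.real z y}
  have hsub : ∀ y ∈ U, ∀ y' ∈ U, G.closedRealNbrs y ⊆ G.closedRealNbrs y' := by
    intro y hy y' hy' x hx
    obtain ⟨hyK, hyZ⟩ := mem_filter.1 hy
    have hy'K := (mem_filter.1 hy').1
    by_contra hx'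
    rw [mem_closedRealNbrs, not_or] at hx'
    rcases G.mem_closedRealNbrs.1 hx with rfl | hxy
    · exact hx'.2 (hK y' hy'K x hyK (Ne.symm hx'.1))
    · have hxC := (hKC y hyK).1 x hxy
      have hfx := (hKC y' hy'K).fuzzy hxC hx'.1 hx'.2
      refine hyZ x (mem_filter.2 ⟨hxC, y', hy'K, ?_⟩) (by rwa [G.real_symm])
      rwa [G.fuzzy_symm]
  have hU : #U ≤ k + 2 := by
    obtain hU | ⟨y₀, hy₀⟩ := U.eq_empty_or_nonempty
    · simp [hU]
    refine (card_le_card fun y hy => mem_filter.2 ⟨mem_univ y, ?_⟩).trans (htwin y₀)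
    exact (hsub y hy y₀ hy₀).antisymm (hsub y₀ hy₀ y hy)
  have hZ : ∀ z ∈ Z, #{y ∈ K | G.real z y} ≤ k := by
    intro z hz
    obtain ⟨-, v, hvK, hzv⟩ := mem_filter.1 hz
    refine (card_le_card fun y hy => ?_).trans (hcommon z v (G.ne_of_fuzzy hzv)
      (G.not_real_of_fuzzy hzv))
    obtain ⟨hyK, hzy⟩ := mem_filter.1 hy
    have hyv : y ≠ v := by
      rintro rfl
      exact G.not_real_of_fuzzy hzv hzy
    simpa [realNbrs, hzy] using hK v hvK y hyK hyv.symm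
  have hcover : K ⊆ U ∪ Z.biUnion fun z => {y ∈ K | G.real z y} := by
    intro y hy
    by_cases h : ∀ z ∈ Z, ¬G.real z y
    · exact mem_union_left _ (mem_filter.2 ⟨hy, h⟩)
    · simp only [not_forall, not_not] at h
      obtain ⟨z, hz, hzy⟩ := h
      exact mem_union_right _ (mem_biUnion.2 ⟨z, hz, mem_filter.2 ⟨hy, hzy⟩⟩)
  calc #K ≤ #U + ∑ z ∈ Z, #{y ∈ K | G.real z y} :=
        (card_le_card hcover).trans ((card_union_le _ _).trans (by gcongr; exact card_biUnion_le))
    _ ≤ k + 2 + #Z * k := by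
        gcongr
        simpa using sum_le_card_nsmul Z _ k hZ

theorem card_le_of_isSettledIn
    (hcommon : ∀ u v, u ≠ v → ¬G.real u v → #(G.realNbrs u ∩ G.realNbrs v) ≤ k)
    (htwin : ∀ y, #{x | G.closedRealNbrs x = G.closedRealNbrs y} ≤ k + 2)
    (hdeg : ∑ w ∈ C, #{u ∈ C | G.fuzzy w u} ≤ 2 * d * (#C - 1))
    (hSC : S ⊆ C) (hS : ∀ u ∈ S, G.IsSettledIn C u) :
    #C ≤ 4 * d * (k + 1) + 2 * k + 2 * #(C \ S) + 3 := by
  set deg : V → ℕ := fun w => #{u ∈ C | G.fuzzy w u}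
  set a := #(C \ S)
  set D := #C - (k + a + 2)
  -- Non-real-adjacent `u, v ∈ C` have `D ≤ deg u + deg v`, so the settled vertices of fuzzy
  -- degree below `D / 2` are pairwise real-adjacent and their fuzzy neighbours lie in `W`.
  set W := {w ∈ C | D ≤ 2 * deg w}
  set K := S \ W
  have hKlow : ∀ u ∈ K, 2 * deg u < D := fun u hu => by
    have := (mem_sdiff.1 hu).2
    simp only [W, mem_filter, not_and, not_le] at this
    exact this (hSC (mem_sdiff.1 hu).1)
  have hpair : ∀ u ∈ C, ∀ v ∈ C, u ≠ v → ¬G.real u v → D ≤ deg u + deg v :=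
    fun u hu v hv huv hr => by
      have : #C ≤ a + k + 2 + deg u + deg v := card_le_of_not_real hcommon hS hu hv huv hr
      omega
  have hclique : IsRealClique G K := fun u hu v hv huv => by
    by_contra hr
    have := hpair u (hSC (mem_sdiff.1 hu).1) v (hSC (mem_sdiff.1 hv).1) huv hr
    have := hKlow u hu
    have := hKlow v hv
    omega
  have hZW : {z ∈ C | ∃ v ∈ K, G.fuzzy z v} ⊆ W := by
    intro z hz
    obtain ⟨hzC, v, hvK, hzv⟩ := mem_filter.1 hz
    have := hpair z hzC v (hSC (mem_sdiff.1 hvK).1) (G.ne_of_fuzzy hzv) (G.not_real_of_fuzzy hzv)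
    have := hKlow v hvK
    exact mem_filter.2 ⟨hzC, by omega⟩
  have hK : #K ≤ k + 2 + #W * k :=
    (card_le_of_isRealClique hcommon htwin hclique fun u hu => hS u (mem_sdiff.1 hu).1).trans
      (by gcongr)
  have hC : #C ≤ a + #W + #K := by
    have hcover : C ⊆ C \ S ∪ W ∪ K := fun x hx => by
      by_cases hxS : x ∈ S
      · by_cases hxW : x ∈ W
        · simp [hxW]
        · simp [K, hxS, hxW]
      · simp [hx, hxS]
    have := card_union_le (C \ S ∪ W) K
    have := card_union_le (C \ S) W
    have := card_le_card hcover
    omega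
  have hWD : #W * D ≤ 4 * d * (#C - 1) :=
    calc #W * D = ∑ _w ∈ W, D := by rw [sum_const, smul_eq_mul]
      _ ≤ ∑ w ∈ W, 2 * deg w := sum_le_sum fun w hw => (mem_filter.1 hw).2
      _ ≤ ∑ w ∈ C, 2 * deg w := sum_le_sum_of_subset (filter_subset _ _)
      _ ≤ 4 * d * (#C - 1) := by rw [← mul_sum]; linarith
  have hDD : D * D ≤ 4 * d * (k + 1) * (D + (k + a + 1)) :=
    calc D * D ≤ (k + 1) * #W * D := by
          gcongr
          have : (k + 1) * #W = #W * k + #W := by ring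
          omega
      _ ≤ (k + 1) * (4 * d * (#C - 1)) := by rw [mul_assoc]; gcongr
      _ = 4 * d * (k + 1) * (#C - 1) := by ring
      _ ≤ 4 * d * (k + 1) * (D + (k + a + 1)) := by gcongr; omega
  have := Nat.le_add_of_mul_self_le_mul_add hDD
  omega

end SettledVertices

section Clustering

variable (𝒞 : Finpartition (univ : Finset V))

def IsEdited (u v : V) : Prop :=
  (G.real u v ∧ ¬together 𝒞 u v) ∨ (G.nonedge u v ∧ together 𝒞 u v)

instance (u v : V) : Decidable (G.IsEdited 𝒞 u v) :=
  inferInstanceAs (Decidable (_ ∨ _))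

def affected : Finset V := {u | ∃ v, G.IsEdited 𝒞 u v}

theorem card_affected_le_two_mul_cost {ω : V → V → ℕ} (hω : IsWeight G ω) :
    #(G.affected 𝒞) ≤ 2 * cost G ω 𝒞 := by
  set f : V × V → ℕ := fun p =>
    (if G.real p.1 p.2 ∧ ¬together 𝒞 p.1 p.2 then ω p.1 p.2 else 0) +
      (if G.nonedge p.1 p.2 ∧ together 𝒞 p.1 p.2 then ω p.1 p.2 else 0)
  have hswap : ∀ p, f p.swap = f p := fun p => by
    simp only [f, Prod.fst_swap, Prod.snd_swap, G.real_symm p.2, G.nonedge_comm (u := p.2),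
      together_comm 𝒞 (u := p.2), hω.1 p.2]
  have hsum : ∑ p ∈ univ.offDiag, f p = 2 * cost G ω 𝒞 :=
    (Nat.two_mul_div_two_of_even (even_sum_offDiag_of_swap _ f hswap)).symm
  set P := {p ∈ (univ : Finset V).offDiag | G.IsEdited 𝒞 p.1 p.2}
  have hpos : ∀ p ∈ P, 1 ≤ f p := fun p hp => by
    obtain ⟨hp, hed⟩ := mem_filter.1 hp
    have hω0 : ω p.1 p.2 ≠ 0 := fun h0 => by
      have hf := ((hω.2 p.1 p.2 (mem_offDiag.1 hp).2.2).1 h0)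
      rcases hed with ⟨hr, -⟩ | ⟨hn, -⟩
      · exact G.not_real_of_fuzzy hf hr
      · exact hn.2.2 hf
    rcases hed with h | h <;> simp only [f, if_pos h] <;> omega
  have hsub : G.affected 𝒞 ⊆ P.image Prod.fst := by
    intro u hu
    obtain ⟨v, huv⟩ := (mem_filter.1 hu).2
    have hne : u ≠ v := by
      rcases huv with ⟨hr, -⟩ | ⟨hn, -⟩
      · exact G.ne_of_real hr
      · exact hn.1
    exact mem_image.2 ⟨(u, v), mem_filter.2 ⟨by simp [hne], huv⟩, rfl⟩
  calc #(G.affected 𝒞) ≤ #P := (card_le_card hsub).trans card_image_le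
    _ ≤ ∑ p ∈ P, f p := by simpa using P.card_nsmul_le_sum f 1 hpos
    _ ≤ ∑ p ∈ univ.offDiag, f p := sum_le_sum_of_subset (filter_subset _ _)
    _ = 2 * cost G ω 𝒞 := hsum

variable {G 𝒞} {C : Finset V}

theorem isSettledIn_of_notMem_affected (hC : C ∈ 𝒞.parts) {u : V} (hu : u ∈ C)
    (hA : u ∉ G.affected 𝒞) : G.IsSettledIn C u := by
  have hed : ∀ v, ¬G.IsEdited 𝒞 u v := fun v h => hA (mem_filter.2 ⟨mem_univ u, v, h⟩)
  refine ⟨fun z hz => mem_of_together hC hu ?_, fun z hz hn => hed z (Or.inr ⟨hn, C, hC, hu, hz⟩)⟩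
  by_contra ht
  exact hed z (Or.inl ⟨hz, ht⟩)

theorem inter_affected_nonempty
    (hcomp : ∀ w : V, ∃ u v : V, G.plus.Reachable w u ∧ G.plus.Reachable w v ∧ G.nonedge u v)
    (hC : C ∈ 𝒞.parts) : (C ∩ G.affected 𝒞).Nonempty := by
  by_contra hempty
  have hset : ∀ u ∈ C, G.IsSettledIn C u := fun u hu =>
    isSettledIn_of_notMem_affected hC hu fun hA => hempty ⟨u, mem_inter.2 ⟨hu, hA⟩⟩
  have hreach : ∀ {w u : V}, G.plus.Reachable w u → w ∈ C → u ∈ C := by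
    intro w u h hw
    rw [SimpleGraph.reachable_iff_reflTransGen] at h
    induction h with
    | refl => exact hw
    | tail _ hadj ih => exact (hset _ ih).1 _ hadj
  obtain ⟨w, hw⟩ := 𝒞.nonempty_of_mem_parts hC
  obtain ⟨u, v, hwu, hwv, huv⟩ := hcomp w
  exact (hset u (hreach hwu hw)).2 v (hreach hwv hw) huv

end Clustering

end FuzzyGraph

theorem stmt7_general {V : Type*} [Fintype V] [DecidableEq V]
    (G : FuzzyGraph V) (ω : V → V → ℕ) (hω : IsWeight G ω) (k d : ℕ) (hd : 1 ≤ d)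
    (h1 : ∀ u v : V, u ≠ v → ¬G.real u v → ((G.realNbrs u) ∩ (G.realNbrs v)).card ≤ k)
    (h2 : ∀ K : Finset V, IsCriticalClique G K → K.card ≤ k + 2)
    (h3 : ∀ w : V, ∃ u v : V, G.plus.Reachable w u ∧ G.plus.Reachable w v ∧ G.nonedge u v)
    (h4 : ∃ σ : Fin (Fintype.card V) ≃ V, ∀ i : Fin (Fintype.card V),
      (Finset.univ.filter fun j : Fin (Fintype.card V) => i < j ∧ G.fuzzy (σ i) (σ j)).card ≤ d)
    (hsol : ∃ 𝒞 : Finpartition (Finset.univ : Finset V), cost G ω 𝒞 ≤ k) :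
    Fintype.card V ≤ 30 * k ^ 3 * d := by
  obtain ⟨𝒞, hcost⟩ := hsol
  obtain ⟨σ, hσ⟩ := h4
  set A := G.affected 𝒞 with hA_def
  have hA : #A ≤ 2 * k := (G.card_affected_le_two_mul_cost 𝒞 hω).trans (by omega)
  have hparts : #𝒞.parts ≤ #A := 𝒞.card_parts_le_of_inter_nonempty (subset_univ A)
    fun C hC => FuzzyGraph.inter_affected_nonempty h3 hC
  have hcluster : ∀ C ∈ 𝒞.parts, #C ≤ 4 * d * (k + 1) + 2 * k + 3 + 2 * #(C ∩ A) := by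
    intro C hC
    have := FuzzyGraph.card_le_of_isSettledIn h1 (fun y => h2 _ (G.isCriticalClique_trueTwins y))
      (G.zero.sum_card_filter_adj_le σ hσ C) sdiff_subset
      fun u hu => FuzzyGraph.isSettledIn_of_notMem_affected hC (mem_sdiff.1 hu).1
        (mem_sdiff.1 hu).2
    rw [sdiff_sdiff_right_self, inf_eq_inter, ← hA_def] at this
    omega
  calc Fintype.card V = ∑ C ∈ 𝒞.parts, #C := 𝒞.sum_card_parts.symm
    _ ≤ ∑ C ∈ 𝒞.parts, (4 * d * (k + 1) + 2 * k + 3 + 2 * #(C ∩ A)) := sum_le_sum hcluster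
    _ = #𝒞.parts * (4 * d * (k + 1) + 2 * k + 3) + 2 * #A := by
        rw [sum_add_distrib, sum_const, smul_eq_mul, ← mul_sum,
          𝒞.sum_card_inter_parts (subset_univ A)]
    _ ≤ 2 * k * (4 * d * (k + 1) + 2 * k + 3) + 2 * (2 * k) := by gcongr; omega
    _ ≤ 30 * k ^ 3 * d := by
        rcases Nat.eq_zero_or_pos k with rfl | hk
        · simp
        nlinarith [Nat.mul_le_mul hk hk, Nat.mul_le_mul (Nat.mul_le_mul hk hk) hd,
          Nat.mul_le_mul hk hd]

/-- Under the stated reducedness conditions, if additionally every connected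
component of `G⁽⁺⁾` contains a nonedge and `G` admits a clustering of cost at most `k`,
then `|V| ≤ 30k³d`. -/
theorem stmt7 {V : Type*} [Fintype V] [DecidableEq V]
    (G : FuzzyGraph V) (ω : V → V → ℕ) (hω : IsWeight G ω) (k d : ℕ) (hk : 1 ≤ k) (hd : 1 ≤ d)
    (h1 : ∀ u v : V, u ≠ v → ¬G.real u v → ((G.realNbrs u) ∩ (G.realNbrs v)).card ≤ k)
    (h2 : ∀ K : Finset V, IsCriticalClique G K → K.card ≤ k + 2)
    (h3 : ∀ w : V, ∃ u v : V, G.plus.Reachable w u ∧ G.plus.Reachable w v ∧ G.nonedge u v)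
    (h4 : ∃ σ : Fin (Fintype.card V) ≃ V, ∀ i : Fin (Fintype.card V),
      (Finset.univ.filter fun j : Fin (Fintype.card V) => i < j ∧ G.fuzzy (σ i) (σ j)).card ≤ d)
    (hsol : ∃ 𝒞 : Finpartition (Finset.univ : Finset V), cost G ω 𝒞 ≤ k) :
    Fintype.card V ≤ 30 * k ^ 3 * d :=
  stmt7_general G ω hω k d hd h1 h2 h3 h4 hsol
end

section
/- Let G = (V, E⁺, E⁰) be a fuzzy graph with weight function ω and let k be a nonnegative integer. Let K be a clique in G⁽⁺⁾ with |K| ≥ k + 3 such that all vertices of K have the same closed real neighborhood, i.e., ⋂_{x ∈ K} N⁺[x] = ⋃_{x ∈ K} N⁺[x]. Let v ∈ K and let F be the set of vertices having at least one fuzzy edge to a vertex of K (note that every u ∈ F then satisfies {u,v} ∈ E⁰ ∪ E⁻). For each u ∈ F with {u,v} ∈ E⁻, fix a vertex w_u ∈ K with {u,w_u} ∈ E⁰. Let G' be the fuzzy graph with weight function ω' obtained from G by, for each such u, removing {u,w_u} from E⁰ (so that it becomes a nonedge) and setting ω'({u,w_u}) := ω({u,v}), keeping all other real edges, fuzzy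 edges and weights, and then deleting the vertex v. Then G admits a clustering of cost at most k if and only if G' admits a clustering of cost at most k. -/
open Finset

/-! Since `#K ≥ k + 2`, a clustering of cost at most `k` keeps `K` inside one cluster: splitting a
real clique into two nonempty sides cuts at least `#K - 1 > k` real edges. So in `G` the vertex `v`
lies with the rest of `K`. Conversely, a clustering of `G'` extends to `G` by putting `v` into the
cluster of `K \ {v}`; a star-counting argument shows that this cluster contains every real
neighbour of `v`, and that each nonneighbour of `v` in it has a fuzzy edge into `K`. Under this
correspondence the nonedge `{u, v}` is paid for in `G` exactly when the nonedge `{u, w u}`, of the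
same weight, is paid for in `G'`, and every other pair costs the same in both graphs. -/

theorem Finset.card_subtype_ne {α : Type*} [DecidableEq α] {s : Finset α} {a : α} (ha : a ∈ s) :
    #(s.subtype (· ≠ a)) = #s - 1 := by
  rw [card_subtype, filter_ne', card_erase_of_mem ha]

section Clustering

variable {V W : Type*} [Fintype V] [DecidableEq V] [Fintype W] [DecidableEq W]

theorem together_iff_mem_part {𝒞 : Finpartition (univ : Finset V)} {u x : V} :
    together 𝒞 u x ↔ x ∈ 𝒞.part u := by
  rw [𝒞.mem_part_iff_exists]
  exact exists_congr fun _ => and_congr_right fun _ => and_comm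

theorem together_iff_part_eq {𝒞 : Finpartition (univ : Finset V)} {u x : V} :
    together 𝒞 u x ↔ 𝒞.part u = 𝒞.part x := by
  rw [together_iff_mem_part, 𝒞.mem_part_iff_part_eq_part (mem_univ x) (mem_univ u), eq_comm]

theorem together_refl (𝒞 : Finpartition (univ : Finset V)) (u : V) : together 𝒞 u u :=
  together_iff_part_eq.2 rfl

theorem together_comm_s15 {𝒞 : Finpartition (univ : Finset V)} {u x : V} :
    together 𝒞 u x ↔ together 𝒞 x u := by
  simp only [together_iff_part_eq, eq_comm]

theorem together_trans {𝒞 : Finpartition (univ : Finset V)} {u x y : V}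
    (hux : together 𝒞 u x) (hxy : together 𝒞 x y) : together 𝒞 u y :=
  together_iff_part_eq.2 ((together_iff_part_eq.1 hux).trans (together_iff_part_eq.1 hxy))

instance Setoid.decidableRelKer {α β : Type*} [DecidableEq β] (f : α → β) :
    DecidableRel (Setoid.ker f) :=
  fun x y => inferInstanceAs (Decidable (f x = f y))

def Finpartition.comapUniv (f : V → W) (𝒞 : Finpartition (univ : Finset W)) :
    Finpartition (univ : Finset V) :=
  Finpartition.ofSetoid (Setoid.ker fun x => 𝒞.part (f x))

theorem together_comapUniv {f : V → W} {𝒞 : Finpartition (univ : Finset W)} {x y : V} :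
    together (𝒞.comapUniv f) x y ↔ together 𝒞 (f x) (f y) := by
  rw [together_iff_mem_part, Finpartition.comapUniv, Finpartition.mem_part_ofSetoid_iff_rel,
    together_iff_part_eq]
  rfl

theorem exists_clustering_extend {v : V}
    (𝒞' : Finpartition (univ : Finset {x // x ≠ v})) (t : {x // x ≠ v}) :
    ∃ 𝒞 : Finpartition (univ : Finset V),
      (∀ a b : {x // x ≠ v}, together 𝒞' a b ↔ together 𝒞 a b) ∧
        ∀ a : {x // x ≠ v}, together 𝒞 a v ↔ together 𝒞' a t := by
  let f : V → {x // x ≠ v} := fun x => if h : x = v then t else ⟨x, h⟩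
  have hf : ∀ a : {x // x ≠ v}, f a = a := fun a => dif_neg a.2
  have hfv : f v = t := dif_pos rfl
  exact ⟨𝒞'.comapUniv f, fun a b => by rw [together_comapUniv, hf, hf],
    fun a => by rw [together_comapUniv, hf, hfv]⟩

end Clustering

section Graph

variable {V : Type*} {G : FuzzyGraph V}

theorem FuzzyGraph.ne_of_real_s15 {u x : V} (h : G.real u x) : u ≠ x := by
  rintro rfl
  simp [G.real_irrefl] at h

theorem FuzzyGraph.ne_of_fuzzy_s15 {u x : V} (h : G.fuzzy u x) : u ≠ x := by
  rintro rfl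
  simp [G.fuzzy_irrefl] at h

theorem IsRealClique.not_nonedge {K : Finset V} (hK : IsRealClique G K) {x y : V} (hx : x ∈ K)
    (hy : y ∈ K) : ¬G.nonedge x y :=
  fun h => h.2.1 (hK x hx y hy h.1)

theorem FuzzyGraph.nonedge_comm_s15 {u x : V} : G.nonedge u x ↔ G.nonedge x u := by
  simp only [FuzzyGraph.nonedge, ne_comm, G.real_symm u x, G.fuzzy_symm u x]

end Graph

section PairCost

variable {V : Type*} [Fintype V] [DecidableEq V] {G : FuzzyGraph V} {ω : V → V → ℕ}
  {𝒞 : Finpartition (univ : Finset V)}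

theorem IsWeight.ne_zero_of_real (hω : IsWeight G ω) {u x : V} (h : G.real u x) : ω u x ≠ 0 :=
  fun h0 => G.not_real_and_fuzzy u x ⟨h, (hω.2 u x (G.ne_of_real_s15 h)).1 h0⟩

theorem IsWeight.ne_zero_of_nonedge (hω : IsWeight G ω) {u x : V} (h : G.nonedge u x) :
    ω u x ≠ 0 :=
  fun h0 => h.2.2 ((hω.2 u x h.1).1 h0)

variable (G ω 𝒞) in
def pairCost (u x : V) : ℕ :=
  (if G.real u x ∧ ¬together 𝒞 u x then ω u x else 0) +
    (if G.nonedge u x ∧ together 𝒞 u x then ω u x else 0)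

theorem pairCost_self (u : V) : pairCost G ω 𝒞 u u = 0 := by
  simp [pairCost, G.real_irrefl, FuzzyGraph.nonedge]

theorem pairCost_comm (hω : ∀ u x, ω u x = ω x u) (u x : V) :
    pairCost G ω 𝒞 u x = pairCost G ω 𝒞 x u := by
  simp only [pairCost, G.real_symm u x, G.nonedge_comm_s15 (u := u), together_comm_s15 (u := u), hω u x]

theorem pairCost_of_real {u x : V} (h : G.real u x) :
    pairCost G ω 𝒞 u x = if together 𝒞 u x then 0 else ω u x := by
  simp [pairCost, h, FuzzyGraph.nonedge]

theorem pairCost_of_nonedge {u x : V} (h : G.nonedge u x) :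
    pairCost G ω 𝒞 u x = if together 𝒞 u x then ω u x else 0 := by
  simp [pairCost, h, h.2.1]

theorem pairCost_of_fuzzy {u x : V} (h : G.fuzzy u x) : pairCost G ω 𝒞 u x = 0 := by
  have : ¬G.real u x := fun hr => G.not_real_and_fuzzy u x ⟨hr, h⟩
  simp [pairCost, this, FuzzyGraph.nonedge, h]

theorem cost_eq_sum_pairCost : cost G ω 𝒞 = (∑ x, ∑ y, pairCost G ω 𝒞 x y) / 2 := by
  rw [← Fintype.sum_prod_type', ← sum_subset (subset_univ univ.offDiag)]
  · rfl
  · intro p _ hp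
    rw [show p.1 = p.2 by simpa using hp]
    exact pairCost_self _

theorem card_mul_card_le_cost (hω : ∀ u x, ω u x = ω x u) {A B : Finset V}
    (h : ∀ x ∈ A, ∀ y ∈ B, 1 ≤ pairCost G ω 𝒞 x y) : #A * #B ≤ cost G ω 𝒞 := by
  have hAB : Disjoint A B := disjoint_left.2 fun x hxA hxB => by
    simpa [pairCost_self] using h x hxA x hxB
  rw [cost_eq_sum_pairCost, Nat.le_div_iff_mul_le two_pos]
  calc #A * #B * 2 = ∑ x ∈ A, ∑ _y ∈ B, 1 + ∑ _y ∈ B, ∑ _x ∈ A, 1 := by simp; ring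
    _ ≤ ∑ x ∈ A, ∑ y ∈ B, pairCost G ω 𝒞 x y + ∑ y ∈ B, ∑ x ∈ A, pairCost G ω 𝒞 y x := by
      gcongr with x hx y hy y hy x hx
      · exact h x hx y hy
      · exact pairCost_comm hω x y ▸ h x hx y hy
    _ ≤ ∑ x ∈ A, ∑ y, pairCost G ω 𝒞 x y + ∑ x ∈ B, ∑ y, pairCost G ω 𝒞 x y := by
      gcongr <;> exact subset_univ _
    _ = ∑ x ∈ A ∪ B, ∑ y, pairCost G ω 𝒞 x y := (sum_union hAB).symm
    _ ≤ ∑ x, ∑ y, pairCost G ω 𝒞 x y := sum_le_sum_of_subset (subset_univ _)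

theorem card_le_cost_of_forall_one_le (hω : ∀ u x, ω u x = ω x u) {u : V} {T : Finset V}
    (h : ∀ x ∈ T, 1 ≤ pairCost G ω 𝒞 u x) : #T ≤ cost G ω 𝒞 := by
  simpa using card_mul_card_le_cost hω (A := {u}) (by simpa using h)

theorem sum_sum_pairCost_eq_add_sum_subtype_ne (hω : ∀ u x, ω u x = ω x u) (v : V) :
    ∑ x, ∑ y, pairCost G ω 𝒞 x y =
      ∑ a : {x // x ≠ v}, ∑ b : {x // x ≠ v}, pairCost G ω 𝒞 a b +
        2 * ∑ a : {x // x ≠ v}, pairCost G ω 𝒞 a v := by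
  simp only [Fintype.sum_eq_add_sum_subtype_ne _ v, pairCost_self, sum_add_distrib,
    pairCost_comm hω v]
  ring

end PairCost

section Cohesion

variable {V : Type*} [Fintype V] [DecidableEq V] {G : FuzzyGraph V} {ω : V → V → ℕ}
  {𝒞 : Finpartition (univ : Finset V)} {k : ℕ}

/-- Splitting a real clique `S` into two nonempty sides `A`, `B` cuts `#A * #B ≥ #S - 1`
real edges. -/
theorem together_of_isRealClique (hω : IsWeight G ω) (hcost : cost G ω 𝒞 ≤ k) {S : Finset V}
    (hS : IsRealClique G S) (hcard : k + 2 ≤ #S) {a b : V} (ha : a ∈ S) (hb : b ∈ S) :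
    together 𝒞 a b := by
  by_contra hab
  set A := S.filter (together 𝒞 a)
  set B := S.filter (¬together 𝒞 a ·)
  have hcut : #A * #B ≤ k := by
    refine le_trans (card_mul_card_le_cost hω.1 fun x hx y hy => ?_) hcost
    obtain ⟨hxS, hax⟩ := mem_filter.1 hx
    obtain ⟨hyS, hay⟩ := mem_filter.1 hy
    have hxy : ¬together 𝒞 x y := fun h => hay (together_trans hax h)
    have hr := hS x hxS y hyS fun h => hxy (h ▸ together_refl 𝒞 x)
    rw [pairCost_of_real hr, if_neg hxy]
    exact Nat.one_le_iff_ne_zero.2 (hω.ne_zero_of_real hr)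
  have hA : 0 < #A := card_pos.2 ⟨a, mem_filter.2 ⟨ha, together_refl 𝒞 a⟩⟩
  have hB : 0 < #B := card_pos.2 ⟨b, mem_filter.2 ⟨hb, hab⟩⟩
  have hsum : #A + #B = #S := card_filter_add_card_filter_not _
  nlinarith

theorem together_of_forall_real (hω : IsWeight G ω) (hcost : cost G ω 𝒞 ≤ k) {T : Finset V}
    (hT : k < #T) {t : V} (hTt : ∀ x ∈ T, together 𝒞 x t) {u : V}
    (hu : ∀ x ∈ T, G.real u x) : together 𝒞 u t := by
  by_contra hut
  refine absurd (le_trans (card_le_cost_of_forall_one_le hω.1 (u := u) fun x hx => ?_) hcost)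
    (not_le.2 hT)
  have hux : ¬together 𝒞 u x := fun h => hut (together_trans h (hTt x hx))
  rw [pairCost_of_real (hu x hx), if_neg hux]
  exact Nat.one_le_iff_ne_zero.2 (hω.ne_zero_of_real (hu x hx))

theorem not_together_of_forall_nonedge (hω : IsWeight G ω) (hcost : cost G ω 𝒞 ≤ k)
    {T : Finset V} (hT : k < #T) {t : V} (hTt : ∀ x ∈ T, together 𝒞 x t) {u : V}
    (hu : ∀ x ∈ T, G.nonedge u x) : ¬together 𝒞 u t := by
  intro hut
  refine absurd (le_trans (card_le_cost_of_forall_one_le hω.1 (u := u) fun x hx => ?_) hcost)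
    (not_le.2 hT)
  have hux : together 𝒞 u x := together_trans hut (together_comm_s15.1 (hTt x hx))
  rw [pairCost_of_nonedge (hu x hx), if_pos hux]
  exact Nat.one_le_iff_ne_zero.2 (hω.ne_zero_of_nonedge (hu x hx))

end Cohesion

section CriticalClique

variable {V : Type*} [Fintype V] [DecidableEq V] {G : FuzzyGraph V} {K : Finset V}

theorem real_of_real_of_inf_eq_sup (hKsame : K.inf G.closedRealNbrs = K.sup G.closedRealNbrs)
    {x y u : V} (hx : x ∈ K) (hy : y ∈ K) (hxu : G.real x u) (huy : u ≠ y) : G.real y u := by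
  have hu : u ∈ K.sup G.closedRealNbrs :=
    mem_sup.2 ⟨x, hx, mem_insert_of_mem (mem_filter.2 ⟨mem_univ u, hxu⟩)⟩
  rw [← hKsame] at hu
  have := Finset.inf_le (f := G.closedRealNbrs) hy hu
  simp only [FuzzyGraph.closedRealNbrs, FuzzyGraph.realNbrs, mem_insert, mem_filter] at this
  tauto

end CriticalClique

section Redirection

variable {V : Type*}

def Redirects (G : FuzzyGraph V) (K : Finset V) (v : V) (w : V → V) (a b : V) : Prop :=
  (∃ x ∈ K, G.fuzzy a x) ∧ G.nonedge a v ∧ b = w a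

instance [DecidableEq V] (G : FuzzyGraph V) (K : Finset V) (v : V) (w : V → V) (a b : V) :
    Decidable (Redirects G K v w a b) :=
  inferInstanceAs (Decidable ((∃ x ∈ K, G.fuzzy a x) ∧ G.nonedge a v ∧ b = w a))

structure IsRedirection [DecidableEq V] (G : FuzzyGraph V) (ω : V → V → ℕ) (K : Finset V) (v : V)
    (w : V → V) (G' : FuzzyGraph {x // x ≠ v}) (ω' : {x // x ≠ v} → {x // x ≠ v} → ℕ) : Prop where
  target : ∀ u, (∃ x ∈ K, G.fuzzy u x) → G.nonedge u v → w u ∈ K ∧ G.fuzzy u (w u)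
  real_iff : ∀ a b, G'.real a b ↔ G.real a.1 b.1
  fuzzy_iff : ∀ a b, G'.fuzzy a b ↔
    (G.fuzzy a.1 b.1 ∧ ¬Redirects G K v w a.1 b.1 ∧ ¬Redirects G K v w b.1 a.1)
  weight_eq : ∀ a b, ω' a b =
    if Redirects G K v w a.1 b.1 then ω a.1 v
    else if Redirects G K v w b.1 a.1 then ω b.1 v
    else ω a.1 b.1

theorem not_redirects_of_mem {G : FuzzyGraph V} {K : Finset V} (hK : IsRealClique G K) {v : V}
    (hvK : v ∈ K) {w : V → V} {a b : V} (ha : a ∈ K) : ¬Redirects G K v w a b :=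
  fun h => hK.not_nonedge ha hvK h.2.1

variable [Fintype V] [DecidableEq V] (G : FuzzyGraph V) (ω : V → V → ℕ) (K : Finset V) (v : V)
  (w : V → V) (𝒞 : Finpartition (univ : Finset V)) in
/-- What `G'` pays for the pair `{a, b}` in place of the nonedge `{a, v}` of `G`. -/
def redirectCost (a b : V) : ℕ :=
  if Redirects G K v w a b ∧ together 𝒞 a b then ω a v else 0

theorem redirectCost_of_not_redirects [Fintype V] [DecidableEq V] {G : FuzzyGraph V}
    {ω : V → V → ℕ} {K : Finset V} {v : V} {w : V → V} {𝒞 : Finpartition (univ : Finset V)}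
    {a b : V} (h : ¬Redirects G K v w a b) : redirectCost G ω K v w 𝒞 a b = 0 :=
  if_neg fun h' => h h'.1

namespace IsRedirection

variable [DecidableEq V] {G : FuzzyGraph V} {ω : V → V → ℕ} {K : Finset V} {v : V} {w : V → V}
  {G' : FuzzyGraph {x // x ≠ v}} {ω' : {x // x ≠ v} → {x // x ≠ v} → ℕ}

theorem fuzzy_of_redirects (hR : IsRedirection G ω K v w G' ω') {a b : V}
    (h : Redirects G K v w a b) : G.fuzzy a b :=
  h.2.2 ▸ (hR.target a h.1 h.2.1).2

theorem mem_of_redirects (hR : IsRedirection G ω K v w G' ω') {a b : V}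
    (h : Redirects G K v w a b) : b ∈ K :=
  h.2.2 ▸ (hR.target a h.1 h.2.1).1

theorem not_redirects_to (hR : IsRedirection G ω K v w G' ω') (a : V) :
    ¬Redirects G K v w a v :=
  fun h => h.2.1.2.2 (hR.fuzzy_of_redirects h)

theorem not_redirects_swap (hR : IsRedirection G ω K v w G' ω') (hK : IsRealClique G K)
    (hvK : v ∈ K) {a b : V} (h : Redirects G K v w a b) : ¬Redirects G K v w b a :=
  not_redirects_of_mem hK hvK (hR.mem_of_redirects h)

theorem nonedge_of_nonedge (hR : IsRedirection G ω K v w G' ω') {a b : {x // x ≠ v}}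
    (h : G.nonedge a b) : G'.nonedge a b :=
  ⟨fun he => h.1 (congrArg Subtype.val he), fun hr => h.2.1 ((hR.real_iff a b).1 hr),
    fun hf => h.2.2 ((hR.fuzzy_iff a b).1 hf).1⟩

theorem nonedge_of_redirects (hR : IsRedirection G ω K v w G' ω') {a b : {x // x ≠ v}}
    (h : Redirects G K v w a b) : G'.nonedge a b := by
  have hf := hR.fuzzy_of_redirects h
  exact ⟨fun he => G.ne_of_fuzzy_s15 hf (congrArg Subtype.val he),
    fun hr => G.not_real_and_fuzzy a b ⟨(hR.real_iff a b).1 hr, hf⟩,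
    fun hf' => ((hR.fuzzy_iff a b).1 hf').2.1 h⟩

theorem nonedge_iff (hR : IsRedirection G ω K v w G' ω') {a b : {x // x ≠ v}}
    (hab : ¬Redirects G K v w a b) (hba : ¬Redirects G K v w b a) :
    G'.nonedge a b ↔ G.nonedge a b := by
  simp only [FuzzyGraph.nonedge, hR.real_iff, hR.fuzzy_iff, hab, hba, ne_eq, Subtype.ext_iff,
    not_false_eq_true, and_true]

theorem isRealClique_subtype (hR : IsRedirection G ω K v w G' ω') (hK : IsRealClique G K) :
    IsRealClique G' (K.subtype (· ≠ v)) := fun a ha b hb hab =>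
  (hR.real_iff a b).2 (hK _ (mem_subtype.1 ha) _ (mem_subtype.1 hb) (Subtype.coe_ne_coe.2 hab))

variable [Fintype V]

theorem isWeight (hR : IsRedirection G ω K v w G' ω') (hω : IsWeight G ω)
    (hK : IsRealClique G K) (hvK : v ∈ K) : IsWeight G' ω' := by
  refine ⟨fun a b => ?_, fun a b hab => ?_⟩
  · rw [hR.weight_eq, hR.weight_eq]
    split_ifs with h1 h2 h2
    · exact absurd h2 (hR.not_redirects_swap hK hvK h1)
    · rfl
    · rfl
    · exact hω.1 _ _
  · rw [hR.weight_eq, hR.fuzzy_iff]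
    split_ifs with h1 h2
    · simp [h1, hω.ne_zero_of_nonedge h1.2.1]
    · simp [h2, hω.ne_zero_of_nonedge h2.2.1]
    · simp [h1, h2, hω.2 a b (Subtype.coe_ne_coe.2 hab)]

variable {𝒞 : Finpartition (univ : Finset V)} {𝒞' : Finpartition (univ : Finset {x // x ≠ v})}
  {k : ℕ}

theorem pairCost_eq_of_redirects (hR : IsRedirection G ω K v w G' ω')
    (hcompat : ∀ a b : {x // x ≠ v}, together 𝒞' a b ↔ together 𝒞 a b) {a b : {x // x ≠ v}}
    (h : Redirects G K v w a b) :
    pairCost G' ω' 𝒞' a b = redirectCost G ω K v w 𝒞 a b := by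
  rw [pairCost_of_nonedge (hR.nonedge_of_redirects h), hR.weight_eq, if_pos h]
  simp [redirectCost, h, hcompat]

theorem pairCost_eq (hR : IsRedirection G ω K v w G' ω') (hω : IsWeight G ω)
    (hK : IsRealClique G K) (hvK : v ∈ K)
    (hcompat : ∀ a b : {x // x ≠ v}, together 𝒞' a b ↔ together 𝒞 a b) (a b : {x // x ≠ v}) :
    pairCost G' ω' 𝒞' a b =
      pairCost G ω 𝒞 a b + redirectCost G ω K v w 𝒞 a b + redirectCost G ω K v w 𝒞 b a := by
  by_cases hab : Redirects G K v w a b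
  · have hba := hR.not_redirects_swap hK hvK hab
    rw [hR.pairCost_eq_of_redirects hcompat hab, pairCost_of_fuzzy (hR.fuzzy_of_redirects hab),
      redirectCost_of_not_redirects hba]
    ring
  by_cases hba : Redirects G K v w b a
  · rw [pairCost_comm (hR.isWeight hω hK hvK).1, hR.pairCost_eq_of_redirects hcompat hba,
      pairCost_comm hω.1, pairCost_of_fuzzy (hR.fuzzy_of_redirects hba),
      redirectCost_of_not_redirects hab]
    ring
  · simp only [pairCost, hR.real_iff, hR.nonedge_iff hab hba, hcompat, hR.weight_eq, if_neg hab,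
      if_neg hba, redirectCost_of_not_redirects hab, redirectCost_of_not_redirects hba, add_zero]

theorem sum_redirectCost (hR : IsRedirection G ω K v w G' ω') (a : V) :
    ∑ b : {x // x ≠ v}, redirectCost G ω K v w 𝒞 a b = redirectCost G ω K v w 𝒞 a (w a) := by
  have h := Fintype.sum_eq_add_sum_subtype_ne (redirectCost G ω K v w 𝒞 a) v
  rw [Fintype.sum_eq_single (w a) fun b hb => redirectCost_of_not_redirects fun h => hb h.2.2,
    redirectCost_of_not_redirects (hR.not_redirects_to a), zero_add] at h
  exact h.symm

theorem sum_sum_pairCost_eq (hR : IsRedirection G ω K v w G' ω') (hω : IsWeight G ω)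
    (hK : IsRealClique G K) (hvK : v ∈ K)
    (hcompat : ∀ a b : {x // x ≠ v}, together 𝒞' a b ↔ together 𝒞 a b) :
    ∑ a, ∑ b, pairCost G' ω' 𝒞' a b =
      ∑ a : {x // x ≠ v}, ∑ b : {x // x ≠ v}, pairCost G ω 𝒞 a b +
        2 * ∑ a : {x // x ≠ v}, redirectCost G ω K v w 𝒞 a (w a) := by
  simp only [hR.pairCost_eq hω hK hvK hcompat, sum_add_distrib, hR.sum_redirectCost]
  rw [sum_comm (f := fun a b : {x // x ≠ v} => redirectCost G ω K v w 𝒞 b a)]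
  simp only [hR.sum_redirectCost]
  ring

theorem redirectCost_le_pairCost (hR : IsRedirection G ω K v w G' ω')
    (hKv : ∀ x ∈ K, together 𝒞 x v) (a : V) :
    redirectCost G ω K v w 𝒞 a (w a) ≤ pairCost G ω 𝒞 a v := by
  unfold redirectCost
  split_ifs with h
  · rw [pairCost_of_nonedge h.1.2.1, if_pos (together_trans h.2 (hKv _ (hR.mem_of_redirects h.1)))]
  · exact Nat.zero_le _

theorem pairCost_le_redirectCost (hR : IsRedirection G ω K v w G' ω')
    (hKv : ∀ x ∈ K, together 𝒞 x v)
    (hreal : ∀ a : {x // x ≠ v}, G.real a v → together 𝒞 a v)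
    (hnon : ∀ a : {x // x ≠ v}, G.nonedge a v → together 𝒞 a v → ∃ x ∈ K, G.fuzzy a x)
    (a : {x // x ≠ v}) : pairCost G ω 𝒞 a v ≤ redirectCost G ω K v w 𝒞 a (w a) := by
  by_cases hr : G.real a v
  · rw [pairCost_of_real hr, if_pos (hreal a hr)]
    exact Nat.zero_le _
  by_cases hf : G.fuzzy a v
  · rw [pairCost_of_fuzzy hf]
    exact Nat.zero_le _
  have hn : G.nonedge a v := ⟨a.2, hr, hf⟩
  rw [pairCost_of_nonedge hn]
  split_ifs with hav
  · have hsrc := hnon a hn hav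
    have hwa := together_comm_s15.1 (hKv _ (hR.target a hsrc hn).1)
    rw [redirectCost, if_pos ⟨⟨hsrc, hn, rfl⟩, together_trans hav hwa⟩]
  · exact Nat.zero_le _

theorem exists_cost_le (hR : IsRedirection G ω K v w G' ω') (hω : IsWeight G ω)
    (hK : IsRealClique G K) (hKcard : k + 2 ≤ #K) (hvK : v ∈ K) (hc : cost G ω 𝒞 ≤ k) :
    ∃ 𝒞' : Finpartition (univ : Finset {x // x ≠ v}), cost G' ω' 𝒞' ≤ k := by
  have hKv : ∀ x ∈ K, together 𝒞 x v := fun x hx =>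
    together_of_isRealClique hω hc hK hKcard hx hvK
  refine ⟨𝒞.comapUniv Subtype.val, le_trans ?_ hc⟩
  rw [cost_eq_sum_pairCost, cost_eq_sum_pairCost,
    hR.sum_sum_pairCost_eq hω hK hvK fun a b => together_comapUniv,
    sum_sum_pairCost_eq_add_sum_subtype_ne hω.1 v]
  gcongr with a
  exact hR.redirectCost_le_pairCost hKv a

theorem together_of_real (hR : IsRedirection G ω K v w G' ω') (hω' : IsWeight G' ω')
    (hKsame : K.inf G.closedRealNbrs = K.sup G.closedRealNbrs) (hKcard : k + 2 ≤ #K)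
    (hvK : v ∈ K) (hc : cost G' ω' 𝒞' ≤ k) {t : {x // x ≠ v}}
    (hKt : ∀ x ∈ K.subtype (· ≠ v), together 𝒞' x t) {a : {x // x ≠ v}} (hav : G.real a v) :
    together 𝒞' a t := by
  by_cases haK : a.1 ∈ K
  · exact hKt a (mem_subtype.2 haK)
  refine together_of_forall_real hω' hc (by rw [card_subtype_ne hvK]; omega) hKt
    fun x hx => (hR.real_iff a x).2 ?_
  have hxK := mem_subtype.1 hx
  rw [G.real_symm]
  exact real_of_real_of_inf_eq_sup hKsame hvK hxK (by rwa [G.real_symm]) fun h => haK (h ▸ hxK)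

theorem exists_fuzzy_of_nonedge (hR : IsRedirection G ω K v w G' ω') (hω' : IsWeight G' ω')
    (hK : IsRealClique G K) (hKsame : K.inf G.closedRealNbrs = K.sup G.closedRealNbrs)
    (hKcard : k + 2 ≤ #K) (hvK : v ∈ K) (hc : cost G' ω' 𝒞' ≤ k) {t : {x // x ≠ v}}
    (hKt : ∀ x ∈ K.subtype (· ≠ v), together 𝒞' x t) {a : {x // x ≠ v}}
    (hav : G.nonedge a v) (hat : together 𝒞' a t) : ∃ x ∈ K, G.fuzzy a x := by
  by_contra! hF
  refine not_together_of_forall_nonedge hω' hc (by rw [card_subtype_ne hvK]; omega) hKt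
    (fun x hx => hR.nonedge_of_nonedge ?_) hat
  have hxK := mem_subtype.1 hx
  refine ⟨fun h => hK.not_nonedge (h ▸ hxK) hvK hav, fun hr => hav.2.1 ?_, hF x hxK⟩
  rw [G.real_symm]
  exact real_of_real_of_inf_eq_sup hKsame hxK hvK (by rwa [G.real_symm]) hav.1

theorem exists_cost_le_of_redirected (hR : IsRedirection G ω K v w G' ω') (hω : IsWeight G ω)
    (hK : IsRealClique G K) (hKsame : K.inf G.closedRealNbrs = K.sup G.closedRealNbrs)
    (hKcard : k + 3 ≤ #K) (hvK : v ∈ K) (hc : cost G' ω' 𝒞' ≤ k) :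
    ∃ 𝒞 : Finpartition (univ : Finset V), cost G ω 𝒞 ≤ k := by
  have hω' := hR.isWeight hω hK hvK
  have hTcard : k + 2 ≤ #(K.subtype (· ≠ v)) := by rw [card_subtype_ne hvK]; omega
  obtain ⟨t, ht⟩ : (K.subtype (· ≠ v)).Nonempty := card_pos.1 (by omega)
  have hKt : ∀ x ∈ K.subtype (· ≠ v), together 𝒞' x t := fun x hx =>
    together_of_isRealClique hω' hc (hR.isRealClique_subtype hK) hTcard hx ht
  obtain ⟨𝒞, hcompat, hv⟩ := exists_clustering_extend 𝒞' t
  have hKv : ∀ x ∈ K, together 𝒞 x v := by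
    intro x hx
    by_cases hxv : x = v
    · exact hxv ▸ together_refl 𝒞 v
    · exact (hv ⟨x, hxv⟩).2 (hKt _ (mem_subtype.2 hx))
  refine ⟨𝒞, le_trans ?_ hc⟩
  rw [cost_eq_sum_pairCost, cost_eq_sum_pairCost, hR.sum_sum_pairCost_eq hω hK hvK hcompat,
    sum_sum_pairCost_eq_add_sum_subtype_ne hω.1 v]
  gcongr with a
  exact hR.pairCost_le_redirectCost hKv
    (fun a hav => (hv a).2 (hR.together_of_real hω' hKsame (by omega) hvK hc hKt hav))
    (fun a hav hat => hR.exists_fuzzy_of_nonedge hω' hK hKsame (by omega) hvK hc hKt hav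
      ((hv a).1 hat)) a

end IsRedirection

end Redirection

/-- Correctness of the rule redirecting fuzzy edges at a critical clique `K`
of size at least `k + 3` and deleting the vertex `v ∈ K`: for each vertex `u` with a fuzzy
edge into `K` and with `{u,v}` a nonedge, a chosen fuzzy edge `{u, w u}` into `K` is turned
into a nonedge of weight `ω({u,v})`; then `v` is deleted.  The resulting instance is
equivalent. -/
theorem stmt15 {V : Type*} [Fintype V] [DecidableEq V]
    (G : FuzzyGraph V) (ω : V → V → ℕ) (hω : IsWeight G ω) (k : ℕ)
    (K : Finset V) (hK : IsRealClique G K) (hKcard : k + 3 ≤ K.card)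
    (hKsame : K.inf G.closedRealNbrs = K.sup G.closedRealNbrs)
    (v : V) (hvK : v ∈ K)
    (w : V → V)
    (hw : ∀ u : V, (∃ x ∈ K, G.fuzzy u x) → G.nonedge u v → (w u ∈ K ∧ G.fuzzy u (w u)))
    (G' : FuzzyGraph {x : V // x ≠ v}) (ω' : {x : V // x ≠ v} → {x : V // x ≠ v} → ℕ)
    (hreal' : ∀ a b : {x : V // x ≠ v}, G'.real a b ↔ G.real a.1 b.1)
    (hfuzzy' : ∀ a b : {x : V // x ≠ v}, G'.fuzzy a b ↔ (G.fuzzy a.1 b.1 ∧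
      ¬((∃ x ∈ K, G.fuzzy a.1 x) ∧ G.nonedge a.1 v ∧ b.1 = w a.1) ∧
      ¬((∃ x ∈ K, G.fuzzy b.1 x) ∧ G.nonedge b.1 v ∧ a.1 = w b.1)))
    (hω' : ∀ a b : {x : V // x ≠ v}, ω' a b =
      if (∃ x ∈ K, G.fuzzy a.1 x) ∧ G.nonedge a.1 v ∧ b.1 = w a.1 then ω a.1 v
      else if (∃ x ∈ K, G.fuzzy b.1 x) ∧ G.nonedge b.1 v ∧ a.1 = w b.1 then ω b.1 v
      else ω a.1 b.1) :
    (∃ 𝒞 : Finpartition (Finset.univ : Finset V), cost G ω 𝒞 ≤ k) ↔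
    (∃ 𝒞' : Finpartition (Finset.univ : Finset {x : V // x ≠ v}), cost G' ω' 𝒞' ≤ k) := by
  have hR : IsRedirection G ω K v w G' ω' := ⟨hw, hreal', hfuzzy', hω'⟩
  exact ⟨fun ⟨_, hc⟩ => hR.exists_cost_le hω hK (by omega) hvK hc,
    fun ⟨_, hc⟩ => hR.exists_cost_le_of_redirected hω hK hKsame hKcard hvK hc⟩
end
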